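/- The adjoint of 𝗁_{φ,ψ}^α = S_ψ^{1/2} H_{φ,ψ}^α S_φ^{1/2} equals 𝗁_{ψ,φ}^{ᾱ} = S_φ^{1/2} H_{ψ,φ}^{ᾱ} S_ψ^{1/2}. -/

import Mathlib

/-!
The inclusion `𝗁_{ψ,φ}^{ᾱ} ⊆ (𝗁_{φ,ψ}^α)*` is formal: `x ↦ ∑ αₙ⟪ψₙ, x⟫φₙ` and
`y ↦ ∑ conj αₙ⟪φₙ, y⟫ψₙ` are formally adjoint, and the square roots are self-adjoint.
For the converse, write `h = Sφ^{1/2} h₀` (`Sφ^{1/2}` is onto because its square `TT*` is) and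
test the adjoint relation on the `f` with `Sφ^{1/2} f = φₘ`: biorthogonality `⟪ψₙ, φₘ⟫ = δₙₘ`
collapses the series to `αₘφₘ`, which shows that `conj αₘ⟪φₘ, Sψ^{1/2} g⟫ = ⟪eₘ, T*h₀⟫`.
Expanding `T*h₀` in the basis `e` and applying `(T⁻¹)*` then gives the series for
`H_{ψ,φ}^{ᾱ} Sψ^{1/2} g`, whose sum `(T⁻¹)*T*h₀ = h₀` is mapped to `h` by `Sφ^{1/2}`.
-/

noncomputable section

open ContinuousLinearMap

local notation "⟪" x ", " y "⟫" => @inner ℂ _ _ x y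

open scoped InnerProductSpace

namespace ContinuousLinearEquiv

variable {𝕜 E : Type*} [RCLike 𝕜] [NormedAddCommGroup E] [InnerProductSpace 𝕜 E] [CompleteSpace E]

theorem adjoint_apply_adjoint_symm_apply (T : E ≃L[𝕜] E) (x : E) :
    adjoint (T : E →L[𝕜] E) (adjoint (T.symm : E →L[𝕜] E) x) = x := by
  rw [← comp_apply, ← adjoint_comp, T.coe_symm_comp_coe, adjoint_id, id_apply]

theorem adjoint_symm_apply_adjoint_apply (T : E ≃L[𝕜] E) (x : E) :
    adjoint (T.symm : E →L[𝕜] E) (adjoint (T : E →L[𝕜] E) x) = x :=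
  T.symm.adjoint_apply_adjoint_symm_apply x

theorem inner_adjoint_symm_apply_apply (T : E ≃L[𝕜] E) (x y : E) :
    ⟪adjoint (T.symm : E →L[𝕜] E) x, T y⟫_𝕜 = ⟪x, y⟫_𝕜 := by
  rw [adjoint_inner_left, coe_coe, symm_apply_apply]

end ContinuousLinearEquiv

section

variable {ι 𝕜 E : Type*} [RCLike 𝕜] [NormedAddCommGroup E] [InnerProductSpace 𝕜 E]

theorem surjective_of_mul_self_eq_mul_adjoint [CompleteSpace E] {S : E →L[𝕜] E}
    (T : E ≃L[𝕜] E) (hS : S * S = (T : E →L[𝕜] E) * adjoint (T : E →L[𝕜] E)) :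
    Function.Surjective S := by
  intro y
  refine ⟨S (adjoint (T.symm : E →L[𝕜] E) (T.symm y)), ?_⟩
  change (S * S) _ = y
  rw [hS]
  exact (congrArg T (T.adjoint_apply_adjoint_symm_apply _)).trans (T.apply_symm_apply y)

theorem Orthonormal.hasSum_inner_smul_single {e : ι → E} (he : Orthonormal 𝕜 e)
    (c : ι → 𝕜) (w : ι → E) (m : ι) :
    HasSum (fun n => (c n * ⟪e n, e m⟫_𝕜) • w n) (c m • w m) := by
  classical
  convert hasSum_single m fun n hn => ?_ using 1
  · simp [inner_self_eq_norm_sq_to_K, he.1 m]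
  · simp [orthonormal_iff_ite.mp he n m, hn]

theorem inner_eq_inner_of_hasSum_of_hasSum_conj (a : ι → 𝕜) (u v : ι → E) {x y k k' : E}
    (hk' : HasSum (fun n => (a n * ⟪u n, x⟫_𝕜) • v n) k')
    (hk : HasSum (fun n => (starRingEnd 𝕜 (a n) * ⟪v n, y⟫_𝕜) • u n) k) :
    ⟪y, k'⟫_𝕜 = ⟪k, x⟫_𝕜 := by
  have hy := hk'.mapL (innerSL 𝕜 y)
  have hx := (hk.mapL (innerSL 𝕜 x)).star
  refine hy.unique ?_
  rw [← inner_conj_symm, ← RCLike.star_def]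
  convert hx using 1
  · funext n
    simp only [innerSL_apply_apply, inner_smul_right, star_mul', RCLike.star_def, RCLike.conj_conj,
      inner_conj_symm]
    ring
  · rfl

theorem exists_hasSum_conj_of_forall_hasSum_inner_eq [CompleteSpace E]
    (e : HilbertBasis ι 𝕜 E) (T : E ≃L[𝕜] E) (α : ι → 𝕜) {Sφ Sψ : E →L[𝕜] E}
    (hSφ : IsSelfAdjoint Sφ) (hSψ : IsSelfAdjoint Sψ) (hSφ_surj : Function.Surjective Sφ)
    {g h : E}
    (hgh : ∀ f k : E, HasSum (fun n =>
        (α n * ⟪adjoint (T.symm : E →L[𝕜] E) (e n), Sφ f⟫_𝕜) • T (e n)) k →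
      ⟪g, Sψ k⟫_𝕜 = ⟪h, f⟫_𝕜) :
    ∃ k, HasSum (fun n =>
        (starRingEnd 𝕜 (α n) * ⟪T (e n), Sψ g⟫_𝕜) • adjoint (T.symm : E →L[𝕜] E) (e n)) k ∧
      Sφ k = h := by
  obtain ⟨h, rfl⟩ := hSφ_surj h
  set x := adjoint (T : E →L[𝕜] E) h
  have coeff (m : ι) : starRingEnd 𝕜 (α m) * ⟪T (e m), Sψ g⟫_𝕜 = ⟪e m, x⟫_𝕜 := by
    obtain ⟨f, hf⟩ := hSφ_surj (T (e m))
    have hsum : HasSum (fun n =>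
        (α n * ⟪adjoint (T.symm : E →L[𝕜] E) (e n), Sφ f⟫_𝕜) • T (e n)) (α m • T (e m)) := by
      simpa only [hf, T.inner_adjoint_symm_apply_apply] using
        e.orthonormal.hasSum_inner_smul_single α (fun n => T (e n)) m
    calc starRingEnd 𝕜 (α m) * ⟪T (e m), Sψ g⟫_𝕜
        = starRingEnd 𝕜 ⟪g, Sψ (α m • T (e m))⟫_𝕜 := by
          rw [map_smul, inner_smul_right, map_mul, inner_conj_symm, ← adjoint_inner_left,
            hSψ.adjoint_eq]
      _ = ⟪f, Sφ h⟫_𝕜 := by rw [hgh f _ hsum, inner_conj_symm]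
      _ = ⟪e m, x⟫_𝕜 := by
          rw [← adjoint_inner_left, hSφ.adjoint_eq, hf]
          exact (adjoint_inner_right (T : E →L[𝕜] E) _ _).symm
  refine ⟨adjoint (T.symm : E →L[𝕜] E) x, ?_, congrArg Sφ (T.adjoint_symm_apply_adjoint_apply h)⟩
  simpa only [coeff, map_smul, e.repr_apply_apply] using
    (e.hasSum_repr x).mapL (adjoint (T.symm : E →L[𝕜] E))

end

theorem adjoint_of_h_general
    {H : Type*} [NormedAddCommGroup H] [InnerProductSpace ℂ H] [CompleteSpace H]
    (e : HilbertBasis ℕ ℂ H) (T : H ≃L[ℂ] H) (φ ψ : ℕ → H)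
    (hφ : ∀ n, φ n = T (e n))
    (hψ : ∀ n, ψ n = adjoint (T.symm : H →L[ℂ] H) (e n)) (α : ℕ → ℂ)
    (Sφhalf Sψhalf : H →L[ℂ] H)
    (hSφhalf : Sφhalf.IsPositive)
    (hSψhalf : Sψhalf.IsPositive)
    (hSφsq : Sφhalf * Sφhalf = (T : H →L[ℂ] H) * adjoint (T : H →L[ℂ] H)) :
    ∀ g h : H,
      (∀ f k : H, HasSum (fun n => (α n * ⟪ψ n, Sφhalf f⟫) • φ n) k →
          ⟪g, Sψhalf k⟫ = ⟪h, f⟫) ↔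
        ∃ k : H, HasSum (fun n => ((starRingEnd ℂ) (α n) * ⟪φ n, Sψhalf g⟫) • ψ n) k ∧
          Sφhalf k = h := by
  intro g h
  constructor
  · obtain rfl : φ = fun n => T (e n) := funext hφ
    obtain rfl : ψ = fun n => adjoint (T.symm : H →L[ℂ] H) (e n) := funext hψ
    exact exists_hasSum_conj_of_forall_hasSum_inner_eq e T α hSφhalf.isSelfAdjoint
      hSψhalf.isSelfAdjoint (surjective_of_mul_self_eq_mul_adjoint T hSφsq)
  · rintro ⟨k, hk, rfl⟩ f k' hk'
    calc ⟪g, Sψhalf k'⟫ = ⟪Sψhalf g, k'⟫ := (hSψhalf.isSelfAdjoint.isSymmetric g k').symm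
      _ = ⟪k, Sφhalf f⟫ := inner_eq_inner_of_hasSum_of_hasSum_conj α ψ φ hk' hk
      _ = ⟪Sφhalf k, f⟫ := (hSφhalf.isSelfAdjoint.isSymmetric k f).symm

theorem adjoint_of_h
    {H : Type*} [NormedAddCommGroup H] [InnerProductSpace ℂ H] [CompleteSpace H]
    (e : HilbertBasis ℕ ℂ H) (T : H ≃L[ℂ] H) (φ ψ : ℕ → H)
    (hφ : ∀ n, φ n = T (e n))
    (hψ : ∀ n, ψ n = adjoint (T.symm : H →L[ℂ] H) (e n)) (α : ℕ → ℂ)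
    (Sφhalf Sψhalf : H →L[ℂ] H)
    (hSφhalf : Sφhalf.IsPositive)
    (hSψhalf : Sψhalf.IsPositive)
    (hSφsq : Sφhalf * Sφhalf = (T : H →L[ℂ] H) * adjoint (T : H →L[ℂ] H))
    (hSψsq : Sψhalf * Sψhalf = adjoint (T.symm : H →L[ℂ] H) * (T.symm : H →L[ℂ] H)) :
    ∀ g h : H,
      (∀ f k : H, HasSum (fun n => (α n * ⟪ψ n, Sφhalf f⟫) • φ n) k →
          ⟪g, Sψhalf k⟫ = ⟪h, f⟫) ↔
        ∃ k : H, HasSum (fun n => ((starRingEnd ℂ) (α n) * ⟪φ n, Sψhalf g⟫) • ψ n) k ∧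
          Sφhalf k = h :=
  adjoint_of_h_general e T φ ψ hφ hψ α Sφhalf Sψhalf hSφhalf hSψhalf hSφsq
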